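/- arXiv:2512.10032 — 2 statements merged into one kernel-verified Lean document; each statement's English description precedes it below -/
import Mathlib

section
/- (Completeness of d-separation in C-DAGs.) Let G_C be a C-ADMG over an admissible partition C = {C_1, …, C_r} of a finite set V in which every cluster is nonempty, and let 𝒳, 𝒴, 𝒵 be pairwise disjoint sets of clusters. If 𝒳 and 𝒴 are not m-separated by 𝒵 in the cluster graph G_C, then there exists an ADMG G over V compatible with G_C in which the vertex sets ∪𝒳 and ∪𝒴 are not m-separated by ∪𝒵 in G. -/
/-- A directed mixed graph over a vertex type `V`: a set of directed edges and a
symmetric set of bidirected edges between distinct vertices. -/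
structure DMG (V : Type) where
  dir : V → V → Prop
  bidir : V → V → Prop
  bidir_symm : ∀ x y, bidir x y → bidir y x
  dir_ne : ∀ x y, dir x y → x ≠ y
  bidir_ne : ∀ x y, bidir x y → x ≠ y

namespace DMG

variable {V : Type} {I : Type}

/-- `X` is an ancestor of `Y`: there is a directed path of length ≥ 1 from `X` to `Y`. -/
def Anc (G : DMG V) : V → V → Prop := Relation.TransGen G.dir

/-- No directed cycles. -/
def Acyclic (G : DMG V) : Prop := ∀ x, ¬ G.Anc x x

/-- No bidirected edges. -/
def NoBidir (G : DMG V) : Prop := ∀ x y, ¬ G.bidir x y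

/-- A DAG: no bidirected edges and no directed cycles. -/
def IsDAG (G : DMG V) : Prop := G.Acyclic ∧ G.NoBidir

/-- Two vertices are adjacent if joined by a directed or bidirected edge. -/
def Adj (G : DMG V) (x y : V) : Prop := G.dir x y ∨ G.dir y x ∨ G.bidir x y

/-- Ancestral graph: no directed cycle, no almost directed cycle. -/
def Ancestral (G : DMG V) : Prop :=
  G.Acyclic ∧ ∀ x y, G.bidir x y → ¬ G.Anc x y

/-- The cluster graph induced by `G` on the partition of `V` into the fibers of `π`. -/
def clusterGraph (G : DMG V) (π : V → I) : DMG I where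
  dir i j := i ≠ j ∧ ∃ x y, π x = i ∧ π y = j ∧ G.dir x y
  bidir i j := i ≠ j ∧ ∃ x y, π x = i ∧ π y = j ∧ G.bidir x y
  bidir_symm := by
    rintro i j ⟨hne, x, y, hx, hy, hb⟩
    exact ⟨hne.symm, y, x, hy, hx, G.bidir_symm _ _ hb⟩
  dir_ne := fun _ _ h => h.1
  bidir_ne := fun _ _ h => h.1

/-- `G` is compatible with the cluster graph `GC` (over the partition given by the
fibers of `π`) if the cluster graph induced by `G` equals `GC`. -/
def CompatibleWith (G : DMG V) (π : V → I) (GC : DMG I) : Prop :=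
  (∀ i j, GC.dir i j ↔ (G.clusterGraph π).dir i j) ∧
  (∀ i j, GC.bidir i j ↔ (G.clusterGraph π).bidir i j)

/-- Walks in a directed mixed graph: each consecutive pair of vertices is joined
by a directed edge (in either direction) or a bidirected edge, and we remember
which edge is used. -/
inductive Walk (G : DMG V) : V → V → Type
  | nil (x : V) : Walk G x x
  | fwd {x y z : V} (h : G.dir x y) (w : Walk G y z) : Walk G x z
  | bwd {x y z : V} (h : G.dir y x) (w : Walk G y z) : Walk G x z
  | bi  {x y z : V} (h : G.bidir x y) (w : Walk G y z) : Walk G x z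

namespace Walk

variable {G : DMG V}

/-- The list of vertices visited by a walk. -/
def support : {x y : V} → Walk G x y → List V
  | _, _, .nil x => [x]
  | _, _, .fwd (x := x) _ w => x :: w.support
  | _, _, .bwd (x := x) _ w => x :: w.support
  | _, _, .bi (x := x) _ w => x :: w.support

/-- Whether a walk is trivial. -/
def isNil : {x y : V} → Walk G x y → Bool
  | _, _, .nil _ => true
  | _, _, .fwd _ _ => false
  | _, _, .bwd _ _ => false
  | _, _, .bi _ _ => false

/-- Whether the first edge of the walk has an arrowhead at the first vertex. -/
def headAtStart : {x y : V} → Walk G x y → Bool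
  | _, _, .nil _ => false
  | _, _, .fwd _ _ => false
  | _, _, .bwd _ _ => true
  | _, _, .bi _ _ => true

/-- The internal (non-endpoint) vertices of a walk, each paired with a Boolean
recording whether it is a collider on the walk (both incident edges of the walk
have an arrowhead at it). -/
def marked : {x y : V} → Walk G x y → List (V × Bool)
  | _, _, .nil _ => []
  | _, _, .fwd (y := y) _ w => (if w.isNil then [] else [(y, w.headAtStart)]) ++ w.marked
  | _, _, .bwd (y := y) _ w => (if w.isNil then [] else [(y, false)]) ++ w.marked
  | _, _, .bi (y := y) _ w => (if w.isNil then [] else [(y, w.headAtStart)]) ++ w.marked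

/-- A walk is a path if its vertices are pairwise distinct. -/
def IsPath {x y : V} (w : Walk G x y) : Prop := w.support.Nodup

/-- A walk is blocked by `S` if it contains a non-collider belonging to `S`, or a
collider such that neither the collider nor any of its descendants belongs to `S`. -/
def Blocked {x y : V} (w : Walk G x y) (S : Set V) : Prop :=
  ∃ p ∈ w.marked,
    (p.2 = false ∧ p.1 ∈ S) ∨
    (p.2 = true ∧ p.1 ∉ S ∧ ∀ d, G.Anc p.1 d → d ∉ S)

end Walk

/-- `x` and `y` are m-separated by `S` in `G`: every path between `x` and `y`
is blocked by `S`.  (In a DAG this is d-separation.) -/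
def MSep (G : DMG V) (x y : V) (S : Set V) : Prop :=
  ∀ w : Walk G x y, w.IsPath → w.Blocked S

/-- Vertex sets `A` and `B` are m-separated by `S`. -/
def MSepSets (G : DMG V) (A B S : Set V) : Prop :=
  ∀ x ∈ A, ∀ y ∈ B, G.MSep x y S

/-- The induced subgraph of `G` on a set `A` of vertices. -/
def induce (G : DMG V) (A : Set V) : DMG A where
  dir x y := G.dir x.1 y.1
  bidir x y := G.bidir x.1 y.1
  bidir_symm := fun _ _ h => G.bidir_symm _ _ h
  dir_ne := fun _ _ h he => G.dir_ne _ _ h (congrArg Subtype.val he)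
  bidir_ne := fun _ _ h he => G.bidir_ne _ _ h (congrArg Subtype.val he)

/-!
Put a copy of `G_C` on one representative of each cluster and leave all other vertices
isolated. The cluster graph of this copy is `G_C`, and the copy is acyclic. A path of `G_C`
lifts to a path of the copy with the same colliders, and the descendants of a representative
are exactly the representatives of the descendants of its cluster, so a path unblocked by `𝒵`
lifts to a path unblocked by `∪𝒵`.
-/

variable {W : Type}

structure Hom (G : DMG V) (H : DMG W) where
  toFun : V → W
  map_dir : ∀ x y, G.dir x y → H.dir (toFun x) (toFun y)
  map_bidir : ∀ x y, G.bidir x y → H.bidir (toFun x) (toFun y)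

def map (G : DMG I) (s : I → V) (hs : Function.Injective s) : DMG V where
  dir x y := ∃ i j, G.dir i j ∧ s i = x ∧ s j = y
  bidir x y := ∃ i j, G.bidir i j ∧ s i = x ∧ s j = y
  bidir_symm := by
    rintro _ _ ⟨i, j, h, rfl, rfl⟩
    exact ⟨j, i, G.bidir_symm i j h, rfl, rfl⟩
  dir_ne := by
    rintro _ _ ⟨i, j, h, rfl, rfl⟩ he
    exact G.dir_ne i j h (hs he)
  bidir_ne := by
    rintro _ _ ⟨i, j, h, rfl, rfl⟩ he
    exact G.bidir_ne i j h (hs he)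

def mapHom (G : DMG I) (s : I → V) (hs : Function.Injective s) : G.Hom (G.map s hs) where
  toFun := s
  map_dir i j h := ⟨i, j, h, rfl, rfl⟩
  map_bidir i j h := ⟨i, j, h, rfl, rfl⟩

section map

variable {G : DMG I} {s : I → V} {hs : Function.Injective s}

theorem exists_anc_of_map_anc {x y : V} (h : (G.map s hs).Anc x y) :
    ∃ i j, s i = x ∧ s j = y ∧ G.Anc i j := by
  induction h with
  | single hxy =>
    obtain ⟨i, j, hij, rfl, rfl⟩ := hxy
    exact ⟨i, j, rfl, rfl, .single hij⟩
  | tail _ hyz ih =>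
    obtain ⟨i, j, rfl, rfl, hij⟩ := ih
    obtain ⟨j', k, hjk, hj', rfl⟩ := hyz
    obtain rfl := hs hj'
    exact ⟨i, k, rfl, rfl, hij.tail hjk⟩

theorem Acyclic.map (hG : G.Acyclic) : (G.map s hs).Acyclic := by
  intro x hx
  obtain ⟨i, j, rfl, hji, hij⟩ := exists_anc_of_map_anc hx
  rw [hs hji] at hij
  exact hG i hij

theorem compatibleWith_map {π : V → I} (hπ : Function.LeftInverse π s) :
    (G.map s hπ.injective).CompatibleWith π G := by
  refine ⟨fun i j => ⟨fun h => ⟨G.dir_ne i j h, s i, s j, hπ i, hπ j, i, j, h, rfl, rfl⟩, ?_⟩,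
    fun i j => ⟨fun h => ⟨G.bidir_ne i j h, s i, s j, hπ i, hπ j, i, j, h, rfl, rfl⟩, ?_⟩⟩
  all_goals
    rintro ⟨-, _, _, rfl, rfl, a, b, h, rfl, rfl⟩
    rwa [hπ a, hπ b]

end map

namespace Walk

variable {G : DMG V} {H : DMG W}

def map (f : G.Hom H) : {x y : V} → Walk G x y → Walk H (f.toFun x) (f.toFun y)
  | _, _, .nil x => .nil (f.toFun x)
  | _, _, .fwd h w => .fwd (f.map_dir _ _ h) (w.map f)
  | _, _, .bwd h w => .bwd (f.map_dir _ _ h) (w.map f)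
  | _, _, .bi h w => .bi (f.map_bidir _ _ h) (w.map f)

variable (f : G.Hom H)

theorem support_map : ∀ {x y : V} (w : Walk G x y),
    (w.map f).support = w.support.map f.toFun
  | _, _, .nil _ => rfl
  | _, _, .fwd _ w => congrArg _ (support_map w)
  | _, _, .bwd _ w => congrArg _ (support_map w)
  | _, _, .bi _ w => congrArg _ (support_map w)

theorem isNil_map {x y : V} (w : Walk G x y) : (w.map f).isNil = w.isNil := by
  cases w <;> rfl

theorem headAtStart_map {x y : V} (w : Walk G x y) :
    (w.map f).headAtStart = w.headAtStart := by
  cases w <;> rfl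

theorem marked_map : ∀ {x y : V} (w : Walk G x y),
    (w.map f).marked = w.marked.map (Prod.map f.toFun id)
  | _, _, .nil _ => rfl
  | _, _, .fwd _ w | _, _, .bwd _ w | _, _, .bi _ w => by
    simp only [map, marked, marked_map w, isNil_map, headAtStart_map, List.map_append]
    split <;> rfl

theorem IsPath.map {f : G.Hom H} (hf : Function.Injective f.toFun) {x y : V}
    {w : Walk G x y} (hw : w.IsPath) : (w.map f).IsPath := by
  rw [IsPath, support_map]
  exact List.Nodup.map hf hw

end Walk

theorem Walk.Blocked.of_map {G : DMG I} {s : I → V} {π : V → I}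
    (hπ : Function.LeftInverse π s) {i j : I} {w : Walk G i j} {S : Set I}
    (hw : (w.map (G.mapHom s hπ.injective)).Blocked (π ⁻¹' S)) : w.Blocked S := by
  obtain ⟨_, hp, hblock⟩ := hw
  rw [Walk.marked_map] at hp
  obtain ⟨⟨k, b⟩, hk, rfl⟩ := List.mem_map.1 hp
  refine ⟨(k, b), hk, ?_⟩
  simp only [mapHom, Prod.map, id, Set.mem_preimage, hπ k] at hblock
  refine hblock.imp id fun ⟨hb, hkS, hdesc⟩ => ⟨hb, hkS, fun d hkd => ?_⟩
  simpa [hπ d] using hdesc (s d) (Relation.TransGen.lift s (mapHom G s _).map_dir _ _ hkd)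

theorem not_mSepSets_map {G : DMG I} {s : I → V} {π : V → I}
    (hπ : Function.LeftInverse π s) {X Y Z : Set I} (h : ¬ G.MSepSets X Y Z) :
    ¬ (G.map s hπ.injective).MSepSets (π ⁻¹' X) (π ⁻¹' Y) (π ⁻¹' Z) := by
  simp only [MSepSets, MSep, not_forall] at h
  obtain ⟨i, hi, j, hj, w, hw, hunblocked⟩ := h
  intro hsep
  refine hunblocked (Walk.Blocked.of_map hπ (hsep (s i) ?_ (s j) ?_ _ (hw.map hπ.injective)))
  · simpa [hπ i] using hi
  · simpa [hπ j] using hj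

end DMG

open DMG in
theorem stmt6_general {V I : Type}
    (π : V → I) (hsurj : Function.Surjective π)
    (GC : DMG I) (hadm : GC.Acyclic)
    (𝒳 𝒴 𝒵 : Set I)
    (hnsep : ¬ GC.MSepSets 𝒳 𝒴 𝒵) :
    ∃ G : DMG V, G.Acyclic ∧ G.CompatibleWith π GC ∧
      ¬ G.MSepSets (π ⁻¹' 𝒳) (π ⁻¹' 𝒴) (π ⁻¹' 𝒵) := by
  have hπ : Function.LeftInverse π (Function.surjInv hsurj) := Function.rightInverse_surjInv hsurj
  exact ⟨GC.map _ hπ.injective, hadm.map, compatibleWith_map hπ, not_mSepSets_map hπ hnsep⟩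

open DMG in
/-- Completeness of d-separation in C-DAGs: if sets of clusters `𝒳`
and `𝒴` are not m-separated by `𝒵` in the C-ADMG `GC` (over a partition with all
clusters nonempty), then there exists a compatible ADMG `G` in which the unions of
the clusters in `𝒳` and `𝒴` are not m-separated by the union of `𝒵`. -/
theorem stmt6 {V I : Type} [Fintype V]
    (π : V → I) (hsurj : Function.Surjective π)
    (GC : DMG I) (hadm : GC.Acyclic)
    (𝒳 𝒴 𝒵 : Set I)
    (hXY : Disjoint 𝒳 𝒴) (hXZ : Disjoint 𝒳 𝒵) (hYZ : Disjoint 𝒴 𝒵)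
    (hnsep : ¬ GC.MSepSets 𝒳 𝒴 𝒵) :
    ∃ G : DMG V, G.Acyclic ∧ G.CompatibleWith π GC ∧
      ¬ G.MSepSets (π ⁻¹' 𝒳) (π ⁻¹' 𝒴) (π ⁻¹' 𝒵) :=
  stmt6_general π hsurj GC hadm 𝒳 𝒴 𝒵 hnsep
end

section
/- (Warm-start pruning lemma.) Let G_C be a C-ADMG over an admissible partition C = {C_1, …, C_r} of a finite set V. Let C_i, C_j be distinct clusters and 𝒮 a set of clusters with C_i, C_j ∉ 𝒮 such that C_i and C_j are m-separated by 𝒮 in the cluster graph G_C. Then for every ADMG G over V compatible with G_C and all X ∈ C_i and Y ∈ C_j, the vertices X and Y are m-separated by ∪𝒮 in G; in particular, X and Y are not adjacent in G. -/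
namespace DMG
namespace Walk

variable {V : Type} {G : DMG V}

/-- Concatenation of walks. -/
def append : {x y z : V} → Walk G x y → Walk G y z → Walk G x z
  | _, _, _, .nil _, w2 => w2
  | _, _, _, .fwd h w, w2 => .fwd h (w.append w2)
  | _, _, _, .bwd h w, w2 => .bwd h (w.append w2)
  | _, _, _, .bi h w, w2 => .bi h (w.append w2)

/-- Number of edges of a walk. -/
def length : {x y : V} → Walk G x y → Nat
  | _, _, .nil _ => 0
  | _, _, .fwd _ w => w.length + 1
  | _, _, .bwd _ w => w.length + 1
  | _, _, .bi _ w => w.length + 1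

/-- Whether the last edge of the walk has an arrowhead at the last vertex. -/
def arrAtEnd : {x y : V} → Walk G x y → Bool
  | _, _, .nil _ => false
  | _, _, .fwd _ w => if w.isNil then true else w.arrAtEnd
  | _, _, .bwd _ w => if w.isNil then false else w.arrAtEnd
  | _, _, .bi _ w => if w.isNil then true else w.arrAtEnd

section ConstructorLemmas

variable {x y z : V}

@[simp] theorem isNil_nil : (Walk.nil x : Walk G x x).isNil = true := rfl
@[simp] theorem isNil_fwd (h : G.dir x y) (w : Walk G y z) :
    (Walk.fwd h w).isNil = false := rfl
@[simp] theorem isNil_bwd (h : G.dir y x) (w : Walk G y z) :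
    (Walk.bwd h w).isNil = false := rfl
@[simp] theorem isNil_bi (h : G.bidir x y) (w : Walk G y z) :
    (Walk.bi h w).isNil = false := rfl

@[simp] theorem headAtStart_nil : (Walk.nil x : Walk G x x).headAtStart = false := rfl
@[simp] theorem headAtStart_fwd (h : G.dir x y) (w : Walk G y z) :
    (Walk.fwd h w).headAtStart = false := rfl
@[simp] theorem headAtStart_bwd (h : G.dir y x) (w : Walk G y z) :
    (Walk.bwd h w).headAtStart = true := rfl
@[simp] theorem headAtStart_bi (h : G.bidir x y) (w : Walk G y z) :
    (Walk.bi h w).headAtStart = true := rfl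

@[simp] theorem support_nil : (Walk.nil x : Walk G x x).support = [x] := rfl
@[simp] theorem support_fwd (h : G.dir x y) (w : Walk G y z) :
    (Walk.fwd h w).support = x :: w.support := rfl
@[simp] theorem support_bwd (h : G.dir y x) (w : Walk G y z) :
    (Walk.bwd h w).support = x :: w.support := rfl
@[simp] theorem support_bi (h : G.bidir x y) (w : Walk G y z) :
    (Walk.bi h w).support = x :: w.support := rfl

@[simp] theorem marked_nil : (Walk.nil x : Walk G x x).marked = [] := rfl
@[simp] theorem marked_fwd (h : G.dir x y) (w : Walk G y z) :
    (Walk.fwd h w).marked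
      = (if w.isNil then [] else [(y, w.headAtStart)]) ++ w.marked := rfl
@[simp] theorem marked_bwd (h : G.dir y x) (w : Walk G y z) :
    (Walk.bwd h w).marked
      = (if w.isNil then [] else [(y, false)]) ++ w.marked := rfl
@[simp] theorem marked_bi (h : G.bidir x y) (w : Walk G y z) :
    (Walk.bi h w).marked
      = (if w.isNil then [] else [(y, w.headAtStart)]) ++ w.marked := rfl

@[simp] theorem length_nil : (Walk.nil x : Walk G x x).length = 0 := rfl
@[simp] theorem length_fwd (h : G.dir x y) (w : Walk G y z) :
    (Walk.fwd h w).length = w.length + 1 := rfl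
@[simp] theorem length_bwd (h : G.dir y x) (w : Walk G y z) :
    (Walk.bwd h w).length = w.length + 1 := rfl
@[simp] theorem length_bi (h : G.bidir x y) (w : Walk G y z) :
    (Walk.bi h w).length = w.length + 1 := rfl

@[simp] theorem arrAtEnd_nil : (Walk.nil x : Walk G x x).arrAtEnd = false := rfl
@[simp] theorem arrAtEnd_fwd (h : G.dir x y) (w : Walk G y z) :
    (Walk.fwd h w).arrAtEnd = if w.isNil then true else w.arrAtEnd := rfl
@[simp] theorem arrAtEnd_bwd (h : G.dir y x) (w : Walk G y z) :
    (Walk.bwd h w).arrAtEnd = if w.isNil then false else w.arrAtEnd := rfl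
@[simp] theorem arrAtEnd_bi (h : G.bidir x y) (w : Walk G y z) :
    (Walk.bi h w).arrAtEnd = if w.isNil then true else w.arrAtEnd := rfl

@[simp] theorem nil_append (w2 : Walk G x z) :
    (Walk.nil x : Walk G x x).append w2 = w2 := rfl
@[simp] theorem fwd_append (h : G.dir x y) (w : Walk G y z) {z' : V} (w2 : Walk G z z') :
    (Walk.fwd h w).append w2 = Walk.fwd h (w.append w2) := rfl
@[simp] theorem bwd_append (h : G.dir y x) (w : Walk G y z) {z' : V} (w2 : Walk G z z') :
    (Walk.bwd h w).append w2 = Walk.bwd h (w.append w2) := rfl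
@[simp] theorem bi_append (h : G.bidir x y) (w : Walk G y z) {z' : V} (w2 : Walk G z z') :
    (Walk.bi h w).append w2 = Walk.bi h (w.append w2) := rfl

end ConstructorLemmas

/-- A walk is m-connecting given `S` if no mark violates the connectivity
conditions: non-colliders are outside `S` and colliders have a descendant
(or themselves) in `S`. -/
def Conn {x y : V} (w : Walk G x y) (S : Set V) : Prop :=
  ∀ p ∈ w.marked,
    (p.2 = false → p.1 ∉ S) ∧
    (p.2 = true → p.1 ∈ S ∨ ∃ d, G.Anc p.1 d ∧ d ∈ S)

theorem conn_of_not_blocked {x y : V} {w : Walk G x y} {S : Set V}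
    (h : ¬ w.Blocked S) : w.Conn S := by
  intro p hp
  constructor
  · intro hf hS; exact h ⟨p, hp, Or.inl ⟨hf, hS⟩⟩
  · intro ht
    by_contra hco
    push_neg at hco
    exact h ⟨p, hp, Or.inr ⟨ht, hco.1, fun d hd hdS => hco.2 d hd hdS⟩⟩

theorem not_blocked_of_conn {x y : V} {w : Walk G x y} {S : Set V}
    (hc : w.Conn S) : ¬ w.Blocked S := by
  rintro ⟨p, hp, h | h⟩
  · exact (hc p hp).1 h.1 h.2
  · rcases (hc p hp).2 h.1 with hS | ⟨d, hd, hdS⟩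
    · exact h.2.1 hS
    · exact h.2.2 d hd hdS

theorem eq_of_isNil {x y : V} {w : Walk G x y} (h : w.isNil = true) : x = y := by
  cases w <;> first | rfl | simp at h

theorem marked_of_isNil {x y : V} {w : Walk G x y} (h : w.isNil = true) :
    w.marked = [] := by
  cases w <;> first | rfl | simp at h

theorem isNil_false_of_headAtStart {x y : V} {w : Walk G x y}
    (h : w.headAtStart = true) : w.isNil = false := by
  cases w <;> first | rfl | simp at h

theorem isNil_append {x y z : V} (w1 : Walk G x y) (w2 : Walk G y z) :
    (w1.append w2).isNil = (w1.isNil && w2.isNil) := by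
  cases w1 <;> simp

theorem headAtStart_append {x y z : V} (w1 : Walk G x y) (w2 : Walk G y z) :
    (w1.append w2).headAtStart
      = if w1.isNil then w2.headAtStart else w1.headAtStart := by
  cases w1 <;> simp

theorem length_append {x y z : V} (w1 : Walk G x y) (w2 : Walk G y z) :
    (w1.append w2).length = w1.length + w2.length := by
  induction w1 <;> simp [*] <;> omega

theorem one_le_length {x y : V} {w : Walk G x y} (h : w.isNil = false) :
    1 ≤ w.length := by
  cases w <;> simp at h ⊢

theorem marked_append {x v z : V} (w1 : Walk G x v) (w2 : Walk G v z) :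
    (w1.append w2).marked
      = w1.marked
        ++ (if w1.isNil || w2.isNil then []
              else [(v, w1.arrAtEnd && w2.headAtStart)])
        ++ w2.marked := by
  induction w1 with
  | nil a => simp
  | fwd h w ih =>
    by_cases hn : w.isNil = true
    · have hv := eq_of_isNil hn
      subst hv
      simp [isNil_append, headAtStart_append, hn, marked_of_isNil hn, ih]
    · rw [Bool.not_eq_true] at hn
      simp [isNil_append, headAtStart_append, hn, ih]
  | bwd h w ih =>
    by_cases hn : w.isNil = true
    · have hv := eq_of_isNil hn
      subst hv
      simp [isNil_append, headAtStart_append, hn, marked_of_isNil hn, ih]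
    · rw [Bool.not_eq_true] at hn
      simp [isNil_append, headAtStart_append, hn, ih]
  | bi h w ih =>
    by_cases hn : w.isNil = true
    · have hv := eq_of_isNil hn
      subst hv
      simp [isNil_append, headAtStart_append, hn, marked_of_isNil hn, ih]
    · rw [Bool.not_eq_true] at hn
      simp [isNil_append, headAtStart_append, hn, ih]

/-- Collider chasing: a walk both of whose end edges have tails at the
endpoints contains a collider which is a descendant of the first vertex. -/
theorem chase : ∀ {u z : V} (w : Walk G u z),
    w.headAtStart = false → w.isNil = false → w.arrAtEnd = false →
    ∃ c, G.Anc u c ∧ (c, true) ∈ w.marked := by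
  intro u z w
  induction w with
  | nil a => intro _ h; simp at h
  | fwd h w ih =>
    intro _ _ hae
    by_cases hn : w.isNil = true
    · simp [hn] at hae
    · rw [Bool.not_eq_true] at hn
      cases hh : w.headAtStart with
      | true =>
        exact ⟨_, Relation.TransGen.single h, by simp [hn, hh]⟩
      | false =>
        obtain ⟨c, hc, hm⟩ := ih hh hn (by simpa [hn] using hae)
        exact ⟨c, Relation.TransGen.head h hc,
          by simp only [marked_fwd, List.mem_append]; exact Or.inr hm⟩
  | bwd h w ih => intro hhs; simp at hhs
  | bi h w ih => intro hhs; simp at hhs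

/-- Splitting a walk at a vertex in its support. -/
theorem split_at {x y : V} (w : Walk G x y) :
    ∀ v ∈ w.support, ∃ (w1 : Walk G x v) (w2 : Walk G v y), w = w1.append w2 := by
  induction w with
  | nil a =>
    intro v hv
    simp at hv
    subst hv
    exact ⟨.nil v, .nil v, rfl⟩
  | fwd h w ih =>
    intro v hv
    rcases List.mem_cons.mp hv with rfl | hv
    · exact ⟨.nil v, .fwd h w, rfl⟩
    · obtain ⟨w1, w2, he⟩ := ih v hv
      exact ⟨.fwd h w1, w2, by rw [he]; rfl⟩
  | bwd h w ih =>
    intro v hv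
    rcases List.mem_cons.mp hv with rfl | hv
    · exact ⟨.nil v, .bwd h w, rfl⟩
    · obtain ⟨w1, w2, he⟩ := ih v hv
      exact ⟨.bwd h w1, w2, by rw [he]; rfl⟩
  | bi h w ih =>
    intro v hv
    rcases List.mem_cons.mp hv with rfl | hv
    · exact ⟨.nil v, .bi h w, rfl⟩
    · obtain ⟨w1, w2, he⟩ := ih v hv
      exact ⟨.bi h w1, w2, by rw [he]; rfl⟩

/-- Decomposition of a non-path walk around a repeated vertex. -/
theorem dup_decomp {x y : V} (w : Walk G x y) (h : ¬ w.support.Nodup) :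
    ∃ (v : V) (w1 : Walk G x v) (w2 : Walk G v v) (w3 : Walk G v y),
      w2.isNil = false ∧ w = w1.append (w2.append w3) := by
  induction w with
  | nil a => simp at h
  | @fwd a b c hd w ih =>
    rw [support_fwd, List.nodup_cons, not_and_or, not_not] at h
    rcases h with h | h
    · obtain ⟨w1, w2, he⟩ := split_at w a h
      exact ⟨a, .nil a, .fwd hd w1, w2, rfl, by rw [he]; rfl⟩
    · obtain ⟨v, w1, w2, w3, hn, he⟩ := ih h
      exact ⟨v, .fwd hd w1, w2, w3, hn, by rw [he]; rfl⟩
  | @bwd a b c hd w ih =>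
    rw [support_bwd, List.nodup_cons, not_and_or, not_not] at h
    rcases h with h | h
    · obtain ⟨w1, w2, he⟩ := split_at w a h
      exact ⟨a, .nil a, .bwd hd w1, w2, rfl, by rw [he]; rfl⟩
    · obtain ⟨v, w1, w2, w3, hn, he⟩ := ih h
      exact ⟨v, .bwd hd w1, w2, w3, hn, by rw [he]; rfl⟩
  | @bi a b c hd w ih =>
    rw [support_bi, List.nodup_cons, not_and_or, not_not] at h
    rcases h with h | h
    · obtain ⟨w1, w2, he⟩ := split_at w a h
      exact ⟨a, .nil a, .bi hd w1, w2, rfl, by rw [he]; rfl⟩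
    · obtain ⟨v, w1, w2, w3, hn, he⟩ := ih h
      exact ⟨v, .bi hd w1, w2, w3, hn, by rw [he]; rfl⟩

/-- Splicing out a closed subwalk preserves m-connectivity. -/
theorem conn_splice {𝒮 : Set V} {x v y : V} (w1 : Walk G x v) (w2 : Walk G v v)
    (w3 : Walk G v y) (h2 : w2.isNil = false)
    (hc : (w1.append (w2.append w3)).Conn 𝒮) : (w1.append w3).Conn 𝒮 := by
  have hbig : (w1.append (w2.append w3)).marked
      = w1.marked
        ++ (if w1.isNil then [] else [(v, w1.arrAtEnd && w2.headAtStart)])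
        ++ (w2.marked
            ++ (if w3.isNil then [] else [(v, w2.arrAtEnd && w3.headAtStart)])
            ++ w3.marked) := by
    rw [marked_append, marked_append, isNil_append, headAtStart_append, h2]
    simp
  intro p hp
  rw [marked_append] at hp
  rcases List.mem_append.mp hp with hp' | hp3
  · rcases List.mem_append.mp hp' with hp1 | hpj
    · exact hc p (by rw [hbig]; simp only [List.mem_append]; exact Or.inl (Or.inl hp1))
    · by_cases hn1 : w1.isNil = true
      · simp [hn1] at hpj
      · rw [Bool.not_eq_true] at hn1
        by_cases hn3 : w3.isNil = true
        · simp [hn1, hn3] at hpj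
        · rw [Bool.not_eq_true] at hn3
          simp only [hn1, hn3, Bool.or_self, Bool.false_eq_true, if_false,
            List.mem_singleton] at hpj
          subst hpj
          have hmemL : ((v, w1.arrAtEnd && w2.headAtStart) : V × Bool)
              ∈ (w1.append (w2.append w3)).marked := by
            rw [hbig]; simp [hn1]
          have hmemR : ((v, w2.arrAtEnd && w3.headAtStart) : V × Bool)
              ∈ (w1.append (w2.append w3)).marked := by
            rw [hbig]; simp [hn3]
          constructor
          · intro hf
            rcases Bool.and_eq_false_iff.mp hf with ha | hb
            · exact (hc _ hmemL).1 (by simp [ha])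
            · exact (hc _ hmemR).1 (by simp [hb])
          · intro ht
            have ht2 : w1.arrAtEnd = true ∧ w3.headAtStart = true := by
              have ht' : (w1.arrAtEnd && w3.headAtStart) = true := ht
              simpa using ht'
            obtain ⟨ha1, hb3⟩ := ht2
            cases hS2 : w2.headAtStart with
            | true => exact (hc _ hmemL).2 (by simp [ha1, hS2])
            | false =>
              cases hE2 : w2.arrAtEnd with
              | true => exact (hc _ hmemR).2 (by simp [hE2, hb3])
              | false =>
                obtain ⟨c, hvc, hcm⟩ := chase w2 hS2 h2 hE2
                have hmemC : ((c, true) : V × Bool)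
                    ∈ (w1.append (w2.append w3)).marked := by
                  rw [hbig]; simp only [List.mem_append]
                  exact Or.inr (Or.inl (Or.inl hcm))
                rcases (hc _ hmemC).2 rfl with hcS | ⟨d, hcd, hdS⟩
                · exact Or.inr ⟨c, hvc, hcS⟩
                · exact Or.inr ⟨d, hvc.trans hcd, hdS⟩
  · refine hc p ?_
    rw [hbig]; simp only [List.mem_append]
    exact Or.inr (Or.inr hp3)

/-- Every m-connecting walk yields an m-connecting path. -/
theorem exists_path_conn {𝒮 : Set V} :
    ∀ (n : Nat) {x y : V} (w : Walk G x y), w.length ≤ n → w.Conn 𝒮 →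
      ∃ ρ : Walk G x y, ρ.IsPath ∧ ρ.Conn 𝒮 := by
  intro n
  induction n with
  | zero =>
    intro x y w hl hc
    by_cases hnd : w.support.Nodup
    · exact ⟨w, hnd, hc⟩
    · obtain ⟨v, w1, w2, w3, hn, he⟩ := dup_decomp w hnd
      have := one_le_length hn
      rw [he, length_append, length_append] at hl
      omega
  | succ n ih =>
    intro x y w hl hc
    by_cases hnd : w.support.Nodup
    · exact ⟨w, hnd, hc⟩
    · obtain ⟨v, w1, w2, w3, hn, he⟩ := dup_decomp w hnd
      subst he
      have h1 := one_le_length hn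
      have hc' := conn_splice w1 w2 w3 hn hc
      refine ih (w1.append w3) ?_ hc'
      rw [length_append, length_append] at hl
      rw [length_append]
      omega

end Walk

section Projection

variable {V I : Type} {G : DMG V} {GC : DMG I} {π : V → I} {𝒮 : Set I}

/-- Ancestry projects to the cluster graph. -/
theorem anc_proj (hcomp : G.CompatibleWith π GC) {u v : V} (h : G.Anc u v) :
    π u = π v ∨ GC.Anc (π u) (π v) := by
  induction h with
  | @single b hd =>
    by_cases he : π u = π b
    · exact Or.inl he
    · exact Or.inr (Relation.TransGen.single ((hcomp.1 _ _).mpr ⟨he, u, b, rfl, rfl, hd⟩))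
  | @tail b c hb hd ih =>
    have hstep : π b = π c ∨ GC.dir (π b) (π c) := by
      by_cases he : π b = π c
      · exact Or.inl he
      · exact Or.inr ((hcomp.1 _ _).mpr ⟨he, b, c, rfl, rfl, hd⟩)
    rcases ih with h1 | h1 <;> rcases hstep with h2 | h2
    · exact Or.inl (h1.trans h2)
    · exact Or.inr (by rw [h1]; exact Relation.TransGen.single h2)
    · exact Or.inr (by rw [← h2]; exact h1)
    · exact Or.inr (h1.tail h2)

/-- Projection of an m-connecting walk to the cluster graph. -/
theorem proj (hcomp : G.CompatibleWith π GC) :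
    ∀ {u y : V} (w : Walk G u y), ∀ {a b : I}, π u = a → π y = b →
      w.Conn (π ⁻¹' 𝒮) →
      ∃ ω : Walk GC a b, ω.Conn 𝒮 ∧
        (ω.isNil = false → w.isNil = false) ∧
        (ω.headAtStart = true →
          w.headAtStart = true ∨ ∃ d, (u = d ∨ G.Anc u d) ∧ π d ∈ 𝒮) ∧
        (ω.isNil = false → ω.headAtStart = false →
          (w.isNil = false ∧ w.headAtStart = false) ∨ π u ∉ 𝒮) := by
  intro u y w
  induction w with
  | nil a =>
    intro a b ha hb hC
    subst ha; subst hb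
    exact ⟨.nil _, by intro p hp; simp at hp, by simp, by simp, by simp⟩
  | @fwd x u' y' h w ih =>
    intro a b ha hb hC
    subst ha; subst hb
    have hw : w.Conn (π ⁻¹' 𝒮) := fun p hp =>
      hC p (by rw [Walk.marked_fwd]; exact List.mem_append_right _ hp)
    by_cases hcl : π x = π u'
    · obtain ⟨ω, h1, h2, h3, h4⟩ := ih (a := π x) (b := π y') hcl.symm rfl hw
      refine ⟨ω, h1, fun _ => rfl, ?_, fun _ _ => Or.inl ⟨rfl, rfl⟩⟩
      intro hhs
      rcases h3 hhs with hws | ⟨d, hd, hdS⟩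
      · have hwn : w.isNil = false := Walk.isNil_false_of_headAtStart hws
        have hmem : ((u', true) : V × Bool) ∈ (Walk.fwd h w).marked := by
          simp [hwn, hws]
        rcases (hC _ hmem).2 rfl with hu | ⟨d, hd, hdS⟩
        · exact Or.inr ⟨u', ⟨Or.inr (Relation.TransGen.single h), hu⟩⟩
        · exact Or.inr ⟨d, ⟨Or.inr (Relation.TransGen.head h hd), hdS⟩⟩
      · refine Or.inr ⟨d, ?_, hdS⟩
        rcases hd with rfl | hd
        · exact Or.inr (Relation.TransGen.single h)
        · exact Or.inr (Relation.TransGen.head h hd)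
    · obtain ⟨ω, h1, h2, h3, h4⟩ := ih (a := π u') (b := π y') rfl rfl hw
      have E : GC.dir (π x) (π u') := (hcomp.1 _ _).mpr ⟨hcl, x, u', rfl, rfl, h⟩
      refine ⟨.fwd E ω, ?_, fun _ => rfl,
        fun hx => absurd hx (by simp),
        fun _ _ => Or.inl ⟨rfl, rfl⟩⟩
      intro p hp
      simp only [Walk.marked_fwd, List.mem_append] at hp
      rcases hp with hpj | hpm
      · by_cases hω : ω.isNil = true
        · simp [hω] at hpj
        · rw [Bool.not_eq_true] at hω
          simp only [hω, Bool.false_eq_true, if_false, List.mem_singleton] at hpj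
          subst hpj
          constructor
          · intro hf
            rcases h4 hω hf with ⟨hwn, hws⟩ | hnot
            · have hmem : ((u', false) : V × Bool) ∈ (Walk.fwd h w).marked := by
                simp [hwn, hws]
              exact (hC _ hmem).1 rfl
            · exact hnot
          · intro ht
            have key : ∃ d, (u' = d ∨ G.Anc u' d) ∧ π d ∈ 𝒮 := by
              rcases h3 ht with hws | hk
              · have hwn : w.isNil = false := Walk.isNil_false_of_headAtStart hws
                have hmem : ((u', true) : V × Bool) ∈ (Walk.fwd h w).marked := by
                  simp [hwn, hws]
                rcases (hC _ hmem).2 rfl with hu | ⟨d, hd, hdS⟩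
                · exact ⟨u', Or.inl rfl, hu⟩
                · exact ⟨d, Or.inr hd, hdS⟩
              · exact hk
            obtain ⟨d, hd, hdS⟩ := key
            by_cases he : π u' = π d
            · exact Or.inl (by rw [← he] at hdS; exact hdS)
            · rcases hd with rfl | hd
              · exact absurd rfl he
              · rcases anc_proj hcomp hd with he' | ha'
                · exact absurd he' he
                · exact Or.inr ⟨π d, ha', hdS⟩
      · exact h1 p hpm
  | @bwd x u' y' h w ih =>
    intro a b ha hb hC
    subst ha; subst hb
    have hw : w.Conn (π ⁻¹' 𝒮) := fun p hp =>
      hC p (by rw [Walk.marked_bwd]; exact List.mem_append_right _ hp)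
    by_cases hcl : π x = π u'
    · obtain ⟨ω, h1, h2, h3, h4⟩ := ih (a := π x) (b := π y') hcl.symm rfl hw
      refine ⟨ω, h1, fun _ => rfl, fun _ => Or.inl rfl, ?_⟩
      intro hnn hhs
      have hwn : w.isNil = false := h2 hnn
      have hmem : ((u', false) : V × Bool) ∈ (Walk.bwd h w).marked := by
        simp [hwn]
      refine Or.inr fun hx => (hC _ hmem).1 rfl ?_
      show π u' ∈ 𝒮
      rw [← hcl]; exact hx
    · obtain ⟨ω, h1, h2, h3, h4⟩ := ih (a := π u') (b := π y') rfl rfl hw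
      have E : GC.dir (π u') (π x) :=
        (hcomp.1 _ _).mpr ⟨fun he => hcl he.symm, u', x, rfl, rfl, h⟩
      refine ⟨.bwd E ω, ?_, fun _ => rfl, fun _ => Or.inl rfl,
        fun _ hx => absurd hx (by simp)⟩
      intro p hp
      simp only [Walk.marked_bwd, List.mem_append] at hp
      rcases hp with hpj | hpm
      · by_cases hω : ω.isNil = true
        · simp [hω] at hpj
        · rw [Bool.not_eq_true] at hω
          simp only [hω, Bool.false_eq_true, if_false, List.mem_singleton] at hpj
          subst hpj
          constructor
          · intro _
            have hwn : w.isNil = false := h2 hω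
            have hmem : ((u', false) : V × Bool) ∈ (Walk.bwd h w).marked := by
              simp [hwn]
            exact (hC _ hmem).1 rfl
          · intro ht; exact absurd ht (by simp)
      · exact h1 p hpm
  | @bi x u' y' h w ih =>
    intro a b ha hb hC
    subst ha; subst hb
    have hw : w.Conn (π ⁻¹' 𝒮) := fun p hp =>
      hC p (by rw [Walk.marked_bi]; exact List.mem_append_right _ hp)
    by_cases hcl : π x = π u'
    · obtain ⟨ω, h1, h2, h3, h4⟩ := ih (a := π x) (b := π y') hcl.symm rfl hw
      refine ⟨ω, h1, fun _ => rfl, fun _ => Or.inl rfl, ?_⟩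
      intro hnn hhs
      have hwn : w.isNil = false := h2 hnn
      have hnot : π u' ∉ 𝒮 := by
        rcases h4 hnn hhs with ⟨hwn', hws⟩ | hnot
        · have hmem : ((u', false) : V × Bool) ∈ (Walk.bi h w).marked := by
            simp [hwn, hws]
          exact (hC _ hmem).1 rfl
        · exact hnot
      refine Or.inr fun hx => hnot ?_
      rw [← hcl]; exact hx
    · obtain ⟨ω, h1, h2, h3, h4⟩ := ih (a := π u') (b := π y') rfl rfl hw
      have E : GC.bidir (π x) (π u') := (hcomp.2 _ _).mpr ⟨hcl, x, u', rfl, rfl, h⟩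
      refine ⟨.bi E ω, ?_, fun _ => rfl, fun _ => Or.inl rfl,
        fun _ hx => absurd hx (by simp)⟩
      intro p hp
      simp only [Walk.marked_bi, List.mem_append] at hp
      rcases hp with hpj | hpm
      · by_cases hω : ω.isNil = true
        · simp [hω] at hpj
        · rw [Bool.not_eq_true] at hω
          simp only [hω, Bool.false_eq_true, if_false, List.mem_singleton] at hpj
          subst hpj
          constructor
          · intro hf
            rcases h4 hω hf with ⟨hwn, hws⟩ | hnot
            · have hmem : ((u', false) : V × Bool) ∈ (Walk.bi h w).marked := by
                simp [hwn, hws]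
              exact (hC _ hmem).1 rfl
            · exact hnot
          · intro ht
            have key : ∃ d, (u' = d ∨ G.Anc u' d) ∧ π d ∈ 𝒮 := by
              rcases h3 ht with hws | hk
              · have hwn : w.isNil = false := Walk.isNil_false_of_headAtStart hws
                have hmem : ((u', true) : V × Bool) ∈ (Walk.bi h w).marked := by
                  simp [hwn, hws]
                rcases (hC _ hmem).2 rfl with hu | ⟨d, hd, hdS⟩
                · exact ⟨u', Or.inl rfl, hu⟩
                · exact ⟨d, Or.inr hd, hdS⟩
              · exact hk
            obtain ⟨d, hd, hdS⟩ := key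
            by_cases he : π u' = π d
            · exact Or.inl (by rw [← he] at hdS; exact hdS)
            · rcases hd with rfl | hd
              · exact absurd rfl he
              · rcases anc_proj hcomp hd with he' | ha'
                · exact absurd he' he
                · exact Or.inr ⟨π d, ha', hdS⟩
      · exact h1 p hpm

end Projection

end DMG

open DMG in
/-- Warm-start pruning lemma: if distinct clusters `C_i`, `C_j` are
m-separated by a set of clusters `𝒮` (with `C_i, C_j ∉ 𝒮`) in the C-ADMG `GC`, then
in every compatible ADMG `G`, every `X ∈ C_i` and `Y ∈ C_j` are m-separated by the
union of `𝒮`; in particular `X` and `Y` are not adjacent in `G`. -/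
theorem stmt7 {V I : Type} [Fintype V]
    (π : V → I) (hsurj : Function.Surjective π)
    (GC : DMG I) (hadm : GC.Acyclic)
    (i j : I) (hij : i ≠ j) (𝒮 : Set I) (hi : i ∉ 𝒮) (hj : j ∉ 𝒮)
    (hsep : GC.MSep i j 𝒮) :
    ∀ G : DMG V, G.Acyclic → G.CompatibleWith π GC →
      ∀ x y, π x = i → π y = j →
        G.MSep x y (π ⁻¹' 𝒮) ∧ ¬ G.Adj x y := by
  intro G hGa hcomp x y hx hy
  have hne : x ≠ y := fun he => hij (by rw [← hx, ← hy, he])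
  have hmsep : G.MSep x y (π ⁻¹' 𝒮) := by
    intro w hw
    by_contra hb
    have hc : w.Conn (π ⁻¹' 𝒮) := Walk.conn_of_not_blocked hb
    obtain ⟨ω, hω, -, -, -⟩ := proj hcomp w hx hy hc
    obtain ⟨ρ, hρp, hρc⟩ := Walk.exists_path_conn ω.length ω le_rfl hω
    exact Walk.not_blocked_of_conn hρc (hsep ρ hρp)
  refine ⟨hmsep, ?_⟩
  rintro (h | h | h)
  · have := hmsep (.fwd h (.nil y)) (by simp [Walk.IsPath, hne])
    simp [Walk.Blocked] at this
  · have := hmsep (.bwd h (.nil y)) (by simp [Walk.IsPath, hne])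
    simp [Walk.Blocked] at this
  · have := hmsep (.bi h (.nil y)) (by simp [Walk.IsPath, hne])
    simp [Walk.Blocked] at this
end
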